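/- Let N = 2^p. For every nonzero frequency k, the one-dimensional Fourier vector φ_k and every Haar wavelet h^1_{n,ℓ} satisfy |⟨φ_k, h^1_{n,ℓ}⟩| ≤ 3√(2π)/√|k|. -/

import Mathlib

/-!
With `z = exp (-2πik/2^p)`, `m = 2^(p-n-1)` and `G = ∑_{i<m} z^i`, the inner product is
`2^(n/2 - p) · z^(ℓ·2^(p-n)) · (1 - z^m) · G`. Since `|1 - z^m| = |G| |z - 1|`, its squared
modulus is `2^(n-2p) |G|^4 |z - 1|^2`, and the trivial bounds `|G| ≤ m` and `|G| |z - 1| ≤ 2`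
combine into `|G|^4 |z - 1|^3 = |G| (|G| |z - 1|)^3 ≤ 8m`. Jordan's inequality gives
`|z - 1| ≥ 4|k|/2^p` for `|k| ≤ 2^(p-1)`, and the two together give `|⟨φ_k, h⟩| ≤ 1/√|k|`.
-/

open Complex Real Finset

noncomputable def haarBlock (p n ℓ e t : ℕ) : ℂ :=
  if ℓ * 2 ^ (p - n) ≤ t ∧ t < ℓ * 2 ^ (p - n) + 2 ^ (p - n - 1) then
    (((2 : ℝ) ^ (((n : ℝ) - p) / 2) : ℝ) : ℂ)
  else if ℓ * 2 ^ (p - n) + 2 ^ (p - n - 1) ≤ t ∧ t < (ℓ + 1) * 2 ^ (p - n) then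
    (-1 : ℂ) ^ e * (((2 : ℝ) ^ (((n : ℝ) - p) / 2) : ℝ) : ℂ)
  else 0

noncomputable def fourierVec (p : ℕ) (k : ℤ) (t : ℕ) : ℂ :=
  ((1 / Real.sqrt (2 ^ p) : ℝ) : ℂ) *
    Complex.exp (2 * π * Complex.I * t * k / 2 ^ p)

lemma Complex.two_div_pi_mul_abs_le_norm_exp_I_mul_ofReal_sub_one {x : ℝ} (hx : |x| ≤ π) :
    2 / π * |x| ≤ ‖exp (I * x) - 1‖ := by
  have hx2 : |x / 2| ≤ π / 2 := by rw [abs_div, abs_two]; linarith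
  rw [norm_exp_I_mul_ofReal_sub_one, norm_mul, Real.norm_eq_abs, Real.norm_eq_abs, abs_two]
  calc 2 / π * |x| = 2 * (2 / π * |x / 2|) := by rw [abs_div, abs_two]; ring
    _ ≤ 2 * |Real.sin (x / 2)| := by gcongr; exact mul_abs_le_abs_sin hx2

lemma norm_one_sub_pow_mul_geom_sum_sq_mul_le {z : ℂ} (hz : ‖z‖ = 1) (m : ℕ) :
    ‖(1 - z ^ m) * ∑ i ∈ range m, z ^ i‖ ^ 2 * ‖z - 1‖ ≤ 8 * (m : ℝ) := by
  set G := ∑ i ∈ range m, z ^ i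
  have hG : ‖G‖ ≤ m := (norm_sum_le _ _).trans (by simp [hz])
  have h_one_sub : ‖1 - z ^ m‖ = ‖G‖ * ‖z - 1‖ := by
    rw [← norm_mul, geom_sum_mul, norm_sub_rev]
  have h_two : ‖G‖ * ‖z - 1‖ ≤ 2 :=
    h_one_sub ▸ (norm_sub_le _ _).trans (by norm_num [hz])
  calc ‖(1 - z ^ m) * G‖ ^ 2 * ‖z - 1‖ = ‖G‖ * (‖G‖ * ‖z - 1‖) ^ 3 := by
        rw [norm_mul, h_one_sub]; ring
    _ ≤ (m : ℝ) * 2 ^ 3 := by gcongr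
    _ = 8 * m := by ring

lemma starRingEnd_fourierVec (p : ℕ) (k : ℤ) (t : ℕ) :
    starRingEnd ℂ (fourierVec p k t) =
      ((1 / √(2 ^ p) : ℝ) : ℂ) * exp (I * ((-(2 * π * k / 2 ^ p) : ℝ) : ℂ)) ^ t := by
  rw [fourierVec, map_mul, conj_ofReal, ← exp_conj, ← Complex.exp_nat_mul]
  congr 2
  simp only [map_div₀, map_mul, conj_I, conj_ofReal, map_natCast, map_intCast, map_pow, map_ofNat]
  push_cast
  ring

lemma two_pow_sub_eq_two_mul {p n : ℕ} (hn : n < p) : 2 ^ (p - n) = 2 * 2 ^ (p - n - 1) := by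
  rw [← pow_succ']; congr 1; omega

lemma sum_mul_haarBlock {p n ℓ : ℕ} (hn : n < p) (hℓ : ℓ < 2 ^ n) (e : ℕ) (f : ℕ → ℂ) :
    ∑ t ∈ range (2 ^ p), f t * haarBlock p n ℓ e t =
      ((2 : ℝ) ^ (((n : ℝ) - p) / 2) : ℝ) * ∑ i ∈ range (2 ^ (p - n - 1)),
        (f (ℓ * 2 ^ (p - n) + i) + (-1) ^ e * f (ℓ * 2 ^ (p - n) + 2 ^ (p - n - 1) + i)) := by
  have hblock : (ℓ + 1) * 2 ^ (p - n) = ℓ * 2 ^ (p - n) + 2 * 2 ^ (p - n - 1) := by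
    rw [add_one_mul, two_pow_sub_eq_two_mul hn]
  have hfits : (ℓ + 1) * 2 ^ (p - n) ≤ 2 ^ p := by
    calc (ℓ + 1) * 2 ^ (p - n) ≤ 2 ^ n * 2 ^ (p - n) := Nat.mul_le_mul_right _ hℓ
      _ = 2 ^ p := by rw [← pow_add, Nat.add_sub_cancel' hn.le]
  set a := ℓ * 2 ^ (p - n)
  set m := 2 ^ (p - n - 1)
  rw [← sum_subset (s₁ := Ico a (a + 2 * m)),
    ← sum_Ico_consecutive _ (show a ≤ a + m by omega) (show a + m ≤ a + 2 * m by omega),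
    sum_Ico_eq_sum_range, sum_Ico_eq_sum_range, show a + m - a = m by omega,
    show a + 2 * m - (a + m) = m by omega, ← sum_add_distrib, mul_sum]
  · refine sum_congr rfl fun i hi => ?_
    have hi := mem_range.1 hi
    rw [haarBlock, if_pos (by omega), haarBlock, if_neg (by omega), if_pos (by omega)]
    ring
  · intro t ht; simp only [mem_Ico, mem_range] at ht ⊢; omega
  · intro t _ ht
    rw [mem_Ico] at ht
    rw [haarBlock, if_neg (by omega), if_neg (by omega), mul_zero]

lemma sum_geom_mul_haarBlock {p n ℓ : ℕ} (hn : n < p) (hℓ : ℓ < 2 ^ n) (c z : ℂ) :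
    ∑ t ∈ range (2 ^ p), c * z ^ t * haarBlock p n ℓ 1 t =
      ((2 : ℝ) ^ (((n : ℝ) - p) / 2) : ℝ) * (c * z ^ (ℓ * 2 ^ (p - n)) *
        ((1 - z ^ 2 ^ (p - n - 1)) * ∑ i ∈ range (2 ^ (p - n - 1)), z ^ i)) := by
  rw [sum_mul_haarBlock hn hℓ]
  congr 1
  rw [mul_sum, mul_sum]
  refine sum_congr rfl fun i _ => ?_
  ring

lemma norm_sum_conj_fourierVec_mul_haarBlock_mul_sqrt_le_one {p n ℓ : ℕ} (hn : n < p)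
    (hℓ : ℓ < 2 ^ n) {k : ℤ} (hk : 2 * |k| ≤ 2 ^ p) :
    ‖∑ t ∈ range (2 ^ p), starRingEnd ℂ (fourierVec p k t) * haarBlock p n ℓ 1 t‖ *
      √|(k : ℝ)| ≤ 1 := by
  simp_rw [starRingEnd_fourierVec]
  rw [sum_geom_mul_haarBlock hn hℓ, ← sqrt_sq (norm_nonneg _), ← sqrt_mul (sq_nonneg _),
    sqrt_le_one]
  set θ : ℝ := -(2 * π * k / 2 ^ p)
  set z := exp (I * θ)
  set m := 2 ^ (p - n - 1)
  set Q := ‖(1 - z ^ m) * ∑ i ∈ range m, z ^ i‖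
  have hz : ‖z‖ = 1 := norm_exp_I_mul_ofReal θ
  have hP : (0 : ℝ) < 2 ^ p := by positivity
  have hθ : |θ| = 2 * π * |(k : ℝ)| / 2 ^ p := by
    rw [abs_neg, abs_div, abs_mul, abs_of_pos (by positivity : (0 : ℝ) < 2 * π), abs_of_pos hP]
  have hθπ : |θ| ≤ π := by
    have : 2 * |(k : ℝ)| ≤ 2 ^ p := by exact_mod_cast hk
    rw [hθ, div_le_iff₀ hP]
    linarith [mul_le_mul_of_nonneg_left this pi_pos.le]
  have hdist : 4 * |(k : ℝ)| / 2 ^ p ≤ ‖z - 1‖ := by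
    convert two_div_pi_mul_abs_le_norm_exp_I_mul_ofReal_sub_one hθπ using 1
    rw [hθ]; field_simp; ring
  have hQ : Q ^ 2 * |(k : ℝ)| ≤ 2 * m * 2 ^ p := by
    have := (mul_le_mul_of_nonneg_left hdist (sq_nonneg Q)).trans
      (norm_one_sub_pow_mul_geom_sum_sq_mul_le hz m)
    rw [mul_div_assoc', div_le_iff₀ hP] at this
    linarith
  have hc : ((2 : ℝ) ^ (((n : ℝ) - p) / 2)) ^ 2 = 2 ^ n / 2 ^ p := by
    rw [← Real.rpow_natCast, ← Real.rpow_mul (by norm_num), Nat.cast_ofNat,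
      div_mul_cancel₀ _ two_ne_zero, Real.rpow_sub two_pos, Real.rpow_natCast, Real.rpow_natCast]
  have hs : (1 / √(2 ^ p) : ℝ) ^ 2 = 1 / 2 ^ p := by
    rw [div_pow, one_pow, sq_sqrt hP.le]
  have hm : (2 : ℝ) ^ n * (2 * m) = 2 ^ p := by
    exact_mod_cast show 2 ^ n * (2 * m) = 2 ^ p by
      rw [← two_pow_sub_eq_two_mul hn, ← pow_add, Nat.add_sub_cancel' hn.le]
  rw [norm_mul, norm_mul, norm_mul, norm_pow, hz, one_pow, mul_one, Complex.norm_real,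
    Complex.norm_real, Real.norm_eq_abs, Real.norm_eq_abs, mul_pow, mul_pow, sq_abs, sq_abs, hc, hs]
  calc _ = (2 : ℝ) ^ n / 2 ^ p / 2 ^ p * (Q ^ 2 * |(k : ℝ)|) := by ring
    _ ≤ 2 ^ n / 2 ^ p / 2 ^ p * (2 * m * 2 ^ p) := by gcongr
    _ = 2 ^ n * (2 * m) / 2 ^ p := by field_simp
    _ = 1 := by rw [hm, div_self hP.ne']

/-- For every nonzero frequency `k`, the Fourier vector `φ_k` and every Haar
wavelet `h^1_{n,ℓ}` satisfy `|⟨φ_k, h^1_{n,ℓ}⟩| ≤ 3√(2π)/√|k|`. -/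
theorem stmt_5 (p n ℓ : ℕ) (hn : n < p) (hℓ : ℓ < 2 ^ n)
    (k : ℤ) (hk : k ≠ 0) (hk1 : -(2 ^ p : ℤ) / 2 + 1 ≤ k) (hk2 : k ≤ 2 ^ p / 2) :
    ‖(∑ t ∈ Finset.range (2 ^ p),
        (starRingEnd ℂ) (fourierVec p k t) * haarBlock p n ℓ 1 t)‖ ≤
      3 * Real.sqrt (2 * π) / Real.sqrt |(k : ℝ)| := by
  have hk_le : 2 * |k| ≤ 2 ^ p := by
    obtain ⟨q, hq⟩ : ∃ q : ℤ, 2 ^ p = 2 * q :=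
      ⟨2 ^ (p - 1), by rw [← pow_succ']; congr 1; omega⟩
    rw [hq] at hk1 hk2 ⊢
    rcases abs_cases k with ⟨h, _⟩ | ⟨h, _⟩ <;> omega
  have h_one_le : (1 : ℝ) ≤ 3 * √(2 * π) := by
    have := one_le_sqrt.2 (by linarith [pi_gt_three] : (1 : ℝ) ≤ 2 * π)
    linarith
  rw [le_div_iff₀ (sqrt_pos.2 (abs_pos.2 (Int.cast_ne_zero.2 hk)))]
  exact (norm_sum_conj_fourierVec_mul_haarBlock_mul_sqrt_le_one hn hℓ hk_le).trans h_one_le
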